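/- arXiv:math/9908144 — 4 statements merged into one kernel-verified Lean document; each statement's English description precedes it below -/
import Mathlib

section
/- Let a > 0 and N > 0. For all nonnegative integers m ≠ n, the generalized Charlier polynomials are orthogonal with respect to the inner product ⟨f,g⟩ = ∑_{x=0}^∞ (e^{-a} a^x / x!) f(x) g(x) + N f(0) g(0), i.e. ⟨C_m^{a,N}, C_n^{a,N}⟩ = 0 (the series converges absolutely since the functions are polynomials). -/
/-- Generalized binomial coefficient `x(x-1)⋯(x-k+1)/k!`. -/
noncomputable def genChoose (x : ℝ) (k : ℕ) : ℝ :=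
  (∏ j ∈ Finset.range k, (x - (j : ℝ))) / (Nat.factorial k : ℝ)

/-- The Charlier polynomial `C_n^{(a)}(x) = ∑_{k=0}^n (x choose k) (-a)^{n-k}/(n-k)!`. -/
noncomputable def charlier (a : ℝ) (n : ℕ) (x : ℝ) : ℝ :=
  ∑ k ∈ Finset.range (n + 1),
    genChoose x k * (-a) ^ (n - k) / (Nat.factorial (n - k) : ℝ)

/-- Charlier polynomial with integer index, with the convention `C_{-1}^{(a)} ≡ 0`. -/
noncomputable def charlierZ (a : ℝ) (n : ℤ) (x : ℝ) : ℝ :=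
  if 0 ≤ n then charlier a n.toNat x else 0

/-- Forward difference operator `Δf(x) = f(x+1) - f(x)`. -/
def fdiff (f : ℝ → ℝ) : ℝ → ℝ := fun x => f (x + 1) - f x

/-- Backward difference operator `∇f(x) = f(x) - f(x-1)`. -/
def bdiff (f : ℝ → ℝ) : ℝ → ℝ := fun x => f x - f (x - 1)

/-- The generalized Charlier polynomial
`C_n^{a,N}(x) = [1 + N(-1)^n C_n^{(a)}(-1)] C_n^{(a)}(x) - N(-1)^n C_n^{(a)}(0) C_n^{(a)}(x-1)`. -/
noncomputable def genCharlier (a N : ℝ) (n : ℕ) (x : ℝ) : ℝ :=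
  (1 + N * (-1) ^ n * charlier a n (-1)) * charlier a n x
    - N * (-1) ^ n * charlier a n 0 * charlier a n (x - 1)

/-- The coefficient `A_i(x)` (for `i ≥ 1`) of the difference equation. -/
noncomputable def Acoef (a : ℝ) (i : ℕ) (x : ℝ) : ℝ :=
  ∑ k ∈ Finset.Icc 1 i, (-1 : ℝ) ^ k * charlier (-a) (i - k) (-x + 1) *
    (charlier a k (-1) * charlier a k (x - 2) - charlier a k (-2) * charlier a k (x - 1))

/-- The coefficient `A_0 = (-1)^{n-1} C_{n-1}^{(a)}(-2)` (with `C_{-1}^{(a)} ≡ 0`). -/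
noncomputable def A0coef (a : ℝ) (n : ℕ) : ℝ :=
  (-1 : ℝ) ^ ((n : ℤ) - 1) * charlierZ a ((n : ℤ) - 1) (-2)

/-! With the Poisson weight `w(x) = e^{-a} a^x / x!`, the Charlier polynomials satisfy
`⟨C_m, C_n⟩ = δ_{mn} a^m / m!`: expanding `C_m` in the binomial basis `(x choose k)`, this reduces
to `∑ₓ w(x) C_n(x + k) = (k choose n)`, which follows by induction on `k` from
`C_{n+1}(x + 1) = C_{n+1}(x) + C_n(x)`.

Iterating that relation gives `C_n(x - 1) = ∑_p (-1)^p C_{n-p}(x)`, so for `j < n` the shifted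
polynomial has `⟨C_j, C_n(· - 1)⟩ = (-1)^{n-j} a^j / j!`. The coefficient `N (-1)^n C_n(0)` of
`C_n(x - 1)` in `C_n^{a,N}` is exactly what makes `⟨C_j, C_n^{a,N}⟩ = -N C_j(0) C_n^{a,N}(0)`
for every `j < n`, and `C_m^{a,N}` is a combination of such `C_j` when `m < n`. -/

open Finset Nat

theorem genChoose_eq_ringChoose (x : ℝ) (k : ℕ) : genChoose x k = Ring.choose x k := by
  have h := Ring.descPochhammer_eq_factorial_smul_choose x k
  rw [← Polynomial.eval₂_smulOneHom_eq_smeval, ← Polynomial.eval_map, descPochhammer_map,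
    descPochhammer_eval_eq_prod_range, nsmul_eq_mul] at h
  rw [genChoose, h]
  field_simp

theorem genChoose_natCast (y k : ℕ) : genChoose y k = y.choose k := by
  rw [genChoose_eq_ringChoose, Ring.choose_natCast]

theorem add_pow_div_factorial (x y : ℝ) (n : ℕ) :
    (x + y) ^ n / n ! = ∑ l ∈ range (n + 1), x ^ l / l ! * (y ^ (n - l) / (n - l)!) := by
  rw [add_pow, sum_div]
  refine sum_congr rfl fun l hl => ?_
  rw [Nat.cast_choose ℝ (Nat.lt_succ_iff.1 (mem_range.1 hl))]
  field_simp

section Charlier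

variable (a : ℝ)

theorem charlier_zero (x : ℝ) : charlier a 0 x = 1 := by
  simp [charlier, genChoose]

theorem charlier_succ_eval_add_one (n : ℕ) (x : ℝ) :
    charlier a (n + 1) (x + 1) = charlier a (n + 1) x + charlier a n x := by
  simp only [charlier, genChoose_eq_ringChoose]
  rw [sum_range_succ' _ (n + 1), sum_range_succ' _ (n + 1)]
  simp only [Ring.choose_succ_succ, Ring.choose_zero_right, Nat.add_sub_add_right, add_mul, add_div,
    sum_add_distrib]
  ring

theorem charlier_eval_sub_one (n : ℕ) (x : ℝ) :
    charlier a n (x - 1) = ∑ p ∈ range (n + 1), (-1) ^ p * charlier a (n - p) x := by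
  induction n with
  | zero => simp [charlier_zero]
  | succ n ih =>
    have h := charlier_succ_eval_add_one a n (x - 1)
    rw [sub_add_cancel] at h
    rw [eq_sub_of_add_eq h.symm, ih, sum_range_succ' _ (n + 1)]
    simp only [pow_succ, Nat.add_sub_add_right, mul_neg_one, neg_mul, sum_neg_distrib, pow_zero,
      one_mul, Nat.sub_zero]
    ring

theorem charlier_eval_zero (n : ℕ) : charlier a n 0 = (-a) ^ n / n ! := by
  rw [charlier, sum_eq_single 0]
  · simp [genChoose]
  · intro k _ hk
    rw [← Nat.cast_zero, genChoose_natCast, Nat.choose_eq_zero_of_lt (Nat.pos_of_ne_zero hk)]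
    simp
  · simp

noncomputable def poissonWeight (x : ℕ) : ℝ :=
  Real.exp (-a) * a ^ x / x !

theorem hasSum_poissonWeight : HasSum (poissonWeight a) 1 := by
  have h := (NormedSpace.expSeries_div_hasSum_exp a).mul_left (Real.exp (-a))
  rw [← Real.exp_eq_exp_ℝ, ← Real.exp_add, neg_add_cancel, Real.exp_zero] at h
  exact h.congr_fun fun x => mul_div_assoc _ _ _

theorem poissonWeight_add_mul_choose (y k : ℕ) :
    poissonWeight a (y + k) * (y + k).choose k = a ^ k / k ! * poissonWeight a y := by
  have h := Nat.add_choose_mul_factorial_mul_factorial y k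
  have hc : ((y + k).choose k : ℝ) ≠ 0 :=
    Nat.cast_ne_zero.2 (Nat.choose_pos (Nat.le_add_left k y)).ne'
  rw [poissonWeight, poissonWeight, ← h, pow_add]
  push_cast
  field_simp

theorem hasSum_poissonWeight_mul_choose_mul {f : ℕ → ℝ} {s : ℝ} (k : ℕ)
    (hf : HasSum (fun y => poissonWeight a y * f (y + k)) s) :
    HasSum (fun x => poissonWeight a x * (x.choose k * f x)) (a ^ k / k ! * s) := by
  have hlow : ∑ x ∈ range k, poissonWeight a x * (x.choose k * f x) = 0 :=
    sum_eq_zero fun x hx => by simp [Nat.choose_eq_zero_of_lt (mem_range.1 hx)]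
  rw [← hasSum_nat_add_iff' k, hlow, sub_zero]
  refine (hf.mul_left (a ^ k / k !)).congr_fun fun y => ?_
  rw [← mul_assoc, poissonWeight_add_mul_choose, mul_assoc]

theorem hasSum_poissonWeight_mul_choose (k : ℕ) :
    HasSum (fun x => poissonWeight a x * x.choose k) (a ^ k / k !) := by
  have h := hasSum_poissonWeight_mul_choose_mul a (f := fun _ => 1) k
    ((hasSum_poissonWeight a).congr_fun fun y => mul_one _)
  rw [mul_one] at h
  exact h.congr_fun fun x => by rw [mul_one]

theorem hasSum_poissonWeight_mul_charlier (n : ℕ) :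
    HasSum (fun x => poissonWeight a x * charlier a n x) (0 ^ n) := by
  have h := hasSum_sum fun l (_ : l ∈ range (n + 1)) =>
    (hasSum_poissonWeight_mul_choose a l).mul_right ((-a) ^ (n - l) / (n - l)!)
  rw [← add_pow_div_factorial, add_neg_cancel, show (0 : ℝ) ^ n / n ! = 0 ^ n by cases n <;> simp]
    at h
  refine h.congr_fun fun x => ?_
  simp only [charlier, genChoose_natCast, mul_sum]
  exact sum_congr rfl fun _ _ => by ring

theorem hasSum_poissonWeight_mul_charlier_add (n k : ℕ) :
    HasSum (fun y => poissonWeight a y * charlier a n ↑(y + k)) (k.choose n) := by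
  induction k generalizing n with
  | zero =>
    have h := hasSum_poissonWeight_mul_charlier a n
    rw [show (0 : ℝ) ^ n = (Nat.choose 0 n : ℝ) by cases n <;> simp] at h
    exact h
  | succ k ih =>
    cases n with
    | zero => simpa [charlier_zero] using hasSum_poissonWeight a
    | succ n =>
      rw [Nat.choose_succ_succ, Nat.cast_add]
      refine ((ih n).add (ih (n + 1))).congr_fun fun y => ?_
      rw [← add_assoc, Nat.cast_succ, charlier_succ_eval_add_one]
      ring

theorem hasSum_choose_mul_charlier (k n : ℕ) :
    HasSum (fun x => poissonWeight a x * (x.choose k * charlier a n x))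
      (a ^ k / k ! * k.choose n) :=
  hasSum_poissonWeight_mul_choose_mul a k (hasSum_poissonWeight_mul_charlier_add a n k)

theorem hasSum_charlier_mul_charlier_of_le {m n : ℕ} (hmn : m ≤ n) :
    HasSum (fun x => poissonWeight a x * (charlier a m x * charlier a n x))
      (if m = n then a ^ m / m ! else 0) := by
  have h := hasSum_sum fun k (_ : k ∈ range (m + 1)) =>
    (hasSum_choose_mul_charlier a k n).mul_right ((-a) ^ (m - k) / (m - k)!)
  have hval : ∑ k ∈ range (m + 1), a ^ k / k ! * k.choose n * ((-a) ^ (m - k) / (m - k)!) =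
      if m = n then a ^ m / m ! else 0 := by
    rw [sum_range_succ, sum_eq_zero fun k hk => by
      rw [Nat.choose_eq_zero_of_lt ((mem_range.1 hk).trans_le hmn)]; simp]
    split_ifs with h
    · subst h; simp
    · simp [Nat.choose_eq_zero_of_lt (lt_of_le_of_ne hmn h)]
  rw [hval] at h
  refine h.congr_fun fun x => ?_
  rw [charlier, sum_mul, mul_sum]
  refine sum_congr rfl fun k _ => ?_
  rw [genChoose_natCast]
  ring

theorem hasSum_charlier_mul_charlier (m n : ℕ) :
    HasSum (fun x => poissonWeight a x * (charlier a m x * charlier a n x))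
      (if m = n then a ^ m / m ! else 0) := by
  rcases le_total m n with h | h
  · exact hasSum_charlier_mul_charlier_of_le a h
  · obtain rfl | hne := eq_or_ne m n
    · exact hasSum_charlier_mul_charlier_of_le a le_rfl
    · have h' := hasSum_charlier_mul_charlier_of_le a h
      rw [if_neg hne.symm] at h'
      rw [if_neg hne]
      exact h'.congr_fun fun x => by ring

theorem hasSum_charlier_mul_charlier_sub_one {j n : ℕ} (hjn : j ≤ n) :
    HasSum (fun x : ℕ => poissonWeight a x * (charlier a j x * charlier a n ((x : ℝ) - 1)))
      ((-1) ^ (n - j) * (a ^ j / j !)) := by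
  have h := hasSum_sum fun p (_ : p ∈ range (n + 1)) =>
    (hasSum_charlier_mul_charlier a j (n - p)).mul_left ((-1) ^ p)
  have hval : ∑ p ∈ range (n + 1), (-1) ^ p * (if j = n - p then a ^ j / j ! else 0) =
      (-1) ^ (n - j) * (a ^ j / j !) := by
    rw [sum_eq_single (n - j)]
    · rw [if_pos (by omega)]
    · intro p hp hne
      rw [if_neg (by have := mem_range.1 hp; omega), mul_zero]
    · intro h
      exact absurd (mem_range.2 (by omega)) h
  rw [hval] at h
  refine h.congr_fun fun x => ?_
  rw [charlier_eval_sub_one, mul_sum, mul_sum]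
  exact sum_congr rfl fun _ _ => by ring

end Charlier

section GenCharlier

variable (a N : ℝ)

theorem genCharlier_eval_zero (n : ℕ) : genCharlier a N n 0 = charlier a n 0 := by
  rw [genCharlier, zero_sub]
  ring

theorem hasSum_charlier_mul_genCharlier {j n : ℕ} (hjn : j < n) :
    HasSum (fun x : ℕ => poissonWeight a x * (charlier a j x * genCharlier a N n x))
      (-(N * (charlier a j 0 * genCharlier a N n 0))) := by
  have h := ((hasSum_charlier_mul_charlier a j n).mul_left
      (1 + N * (-1) ^ n * charlier a n (-1))).sub
    ((hasSum_charlier_mul_charlier_sub_one a hjn.le).mul_left (N * (-1) ^ n * charlier a n 0))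
  have hsign : (-1 : ℝ) ^ n = (-1) ^ (n - j) * (-1) ^ j := by
    rw [← pow_add, Nat.sub_add_cancel hjn.le]
  have hsq : (-1 : ℝ) ^ (n - j) * (-1) ^ (n - j) = 1 := by
    rw [← mul_pow, neg_one_mul, neg_neg, one_pow]
  rw [if_neg hjn.ne, mul_zero, zero_sub,
    show -(N * (-1) ^ n * charlier a n 0 * ((-1) ^ (n - j) * (a ^ j / j !))) =
      -(N * ((-1) ^ j * a ^ j / j ! * charlier a n 0)) by
    rw [hsign]; linear_combination (-(N * (-1) ^ j * charlier a n 0 * (a ^ j / j !))) * hsq] at h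
  rw [genCharlier_eval_zero, charlier_eval_zero a j, neg_pow a j]
  exact h.congr_fun fun x => by rw [genCharlier]; ring

theorem hasSum_charlier_sub_one_mul_genCharlier {m n : ℕ} (hmn : m < n) :
    HasSum (fun x : ℕ => poissonWeight a x * (charlier a m ((x : ℝ) - 1) * genCharlier a N n x))
      (-(N * (charlier a m (-1) * genCharlier a N n 0))) := by
  have h := hasSum_sum fun p (_ : p ∈ range (m + 1)) =>
    (hasSum_charlier_mul_genCharlier a N (j := m - p) (n := n) (by omega)).mul_left ((-1) ^ p)
  have hval : ∑ p ∈ range (m + 1), (-1) ^ p * -(N * (charlier a (m - p) 0 * genCharlier a N n 0)) =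
      -(N * (charlier a m (-1) * genCharlier a N n 0)) := by
    have h0 := charlier_eval_sub_one a m 0
    rw [zero_sub] at h0
    rw [h0, sum_mul, mul_sum, ← sum_neg_distrib]
    exact sum_congr rfl fun _ _ => by ring
  rw [hval] at h
  refine h.congr_fun fun x => ?_
  rw [charlier_eval_sub_one, sum_mul, mul_sum]
  exact sum_congr rfl fun _ _ => by ring

theorem hasSum_genCharlier_mul_genCharlier_of_lt {m n : ℕ} (hmn : m < n) :
    HasSum (fun x : ℕ => poissonWeight a x * (genCharlier a N m x * genCharlier a N n x))
      (-(N * (genCharlier a N m 0 * genCharlier a N n 0))) := by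
  have h := ((hasSum_charlier_mul_genCharlier a N hmn).mul_left
      (1 + N * (-1) ^ m * charlier a m (-1))).sub
    ((hasSum_charlier_sub_one_mul_genCharlier a N hmn).mul_left (N * (-1) ^ m * charlier a m 0))
  rw [show _ - _ = -(N * (genCharlier a N m 0 * genCharlier a N n 0)) by
    simp only [genCharlier, zero_sub]; ring] at h
  exact h.congr_fun fun x => by rw [genCharlier]; ring

theorem hasSum_genCharlier_mul_genCharlier {m n : ℕ} (hmn : m ≠ n) :
    HasSum (fun x : ℕ => poissonWeight a x * (genCharlier a N m x * genCharlier a N n x))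
      (-(N * (genCharlier a N m 0 * genCharlier a N n 0))) := by
  rcases hmn.lt_or_gt with h | h
  · exact hasSum_genCharlier_mul_genCharlier_of_lt a N h
  · have h' := hasSum_genCharlier_mul_genCharlier_of_lt a N h
    rw [mul_comm (genCharlier a N n 0)] at h'
    exact h'.congr_fun fun x => by ring

end GenCharlier

theorem genCharlier_orthogonal_general (a N : ℝ) (m n : ℕ) (hmn : m ≠ n) :
    Summable (fun x : ℕ => Real.exp (-a) * a ^ x / (Nat.factorial x : ℝ) *
      (genCharlier a N m x * genCharlier a N n x)) ∧
    (∑' x : ℕ, Real.exp (-a) * a ^ x / (Nat.factorial x : ℝ) *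
      (genCharlier a N m x * genCharlier a N n x)) +
      N * (genCharlier a N m 0 * genCharlier a N n 0) = 0 := by
  have h : HasSum (fun x : ℕ => Real.exp (-a) * a ^ x / (Nat.factorial x : ℝ) *
      (genCharlier a N m x * genCharlier a N n x))
      (-(N * (genCharlier a N m 0 * genCharlier a N n 0))) :=
    hasSum_genCharlier_mul_genCharlier a N hmn
  exact ⟨h.summable, by rw [h.tsum_eq, neg_add_cancel]⟩

/-- For `a > 0`, `N > 0` and `m ≠ n`, the generalized Charlier polynomials are
orthogonal with respect to `⟨f,g⟩ = ∑_{x=0}^∞ (e^{-a} a^x / x!) f(x)g(x) + N f(0)g(0)`,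
the series converging absolutely. -/
theorem genCharlier_orthogonal (a N : ℝ) (ha : 0 < a) (hN : 0 < N) (m n : ℕ) (hmn : m ≠ n) :
    Summable (fun x : ℕ => Real.exp (-a) * a ^ x / (Nat.factorial x : ℝ) *
      (genCharlier a N m x * genCharlier a N n x)) ∧
    (∑' x : ℕ, Real.exp (-a) * a ^ x / (Nat.factorial x : ℝ) *
      (genCharlier a N m x * genCharlier a N n x)) +
      N * (genCharlier a N m 0 * genCharlier a N n 0) = 0 :=
  genCharlier_orthogonal_general a N m n hmn
end

section
/- For every real a, every real x, and every nonnegative integer n, C_n^{(a)}(x-1) = ∑_{k=0}^n (-1)^k C_{n-k}^{(a)}(x). -/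
lemma genChoose_succ_sub (x : ℝ) (k : ℕ) :
    genChoose x (k + 1) - genChoose (x - 1) (k + 1) = genChoose (x - 1) k := by
  unfold genChoose
  have h1 : ∏ j ∈ Finset.range (k + 1), (x - (j : ℝ))
      = (∏ j ∈ Finset.range k, (x - 1 - (j : ℝ))) * x := by
    rw [Finset.prod_range_succ']
    simp only [Nat.cast_zero, sub_zero]
    congr 1
    apply Finset.prod_congr rfl
    intro j _
    push_cast
    ring
  have h2 : ∏ j ∈ Finset.range (k + 1), (x - 1 - (j : ℝ))
      = (∏ j ∈ Finset.range k, (x - 1 - (j : ℝ))) * (x - 1 - k) := by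
    rw [Finset.prod_range_succ]
  rw [h1, h2]
  have hf : (Nat.factorial (k + 1) : ℝ) = (k + 1) * Nat.factorial k := by
    rw [Nat.factorial_succ]; push_cast; ring
  rw [hf]
  have hk : ((k : ℝ) + 1) ≠ 0 := by positivity
  have hfk : (Nat.factorial k : ℝ) ≠ 0 := by
    exact_mod_cast Nat.factorial_ne_zero k
  field_simp
  ring

lemma charlier_sub (a x : ℝ) (n : ℕ) :
    charlier a (n + 1) x - charlier a (n + 1) (x - 1) = charlier a n (x - 1) := by
  unfold charlier
  rw [Finset.sum_range_succ' (fun k => genChoose x k * (-a) ^ (n + 1 - k) / (Nat.factorial (n + 1 - k) : ℝ)),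
    Finset.sum_range_succ' (fun k => genChoose (x - 1) k * (-a) ^ (n + 1 - k) / (Nat.factorial (n + 1 - k) : ℝ))]
  have h0 : genChoose x 0 = genChoose (x - 1) 0 := by simp [genChoose]
  simp only [h0]
  rw [add_sub_add_right_eq_sub, ← Finset.sum_sub_distrib]
  apply Finset.sum_congr rfl
  intro k _
  have hs : n + 1 - (k + 1) = n - k := by omega
  rw [hs, div_sub_div_same, ← sub_mul, genChoose_succ_sub]

/-- `C_n^{(a)}(x-1) = ∑_{k=0}^n (-1)^k C_{n-k}^{(a)}(x)`. -/
theorem charlier_shift_down (a x : ℝ) (n : ℕ) :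
    charlier a n (x - 1) = ∑ k ∈ Finset.range (n + 1), (-1 : ℝ) ^ k * charlier a (n - k) x := by
  induction n with
  | zero => simp [charlier, genChoose]
  | succ n ih =>
    rw [Finset.sum_range_succ' (fun k => (-1 : ℝ) ^ k * charlier a (n + 1 - k) x)]
    have : ∀ k ∈ Finset.range (n + 1),
        (-1 : ℝ) ^ (k + 1) * charlier a (n + 1 - (k + 1)) x
          = -((-1 : ℝ) ^ k * charlier a (n - k) x) := by
      intro k _
      have hs : n + 1 - (k + 1) = n - k := by omega
      rw [hs, pow_succ]
      ring
    rw [Finset.sum_congr rfl this, Finset.sum_neg_distrib, ← ih]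
    simp only [pow_zero, one_mul, Nat.sub_zero]
    linarith [charlier_sub a x n]
end

section
/- For every real a, every real x, and every nonnegative integer n, the Charlier polynomial evaluated at x equals the generalized Laguerre polynomial with parameter x − n evaluated at a: C_n^{(a)}(x) = L_n^{(x−n)}(a), where L_n^{(α)}(t) = (1/n!) ∑_{k=0}^n (−n)_k (α+k+1)_{n−k} t^k / k! and (c)_j = c(c+1)⋯(c+j−1) denotes the Pochhammer symbol. -/
/-- The generalized Laguerre polynomial
`L_n^{(α)}(t) = (1/n!) ∑_{k=0}^n (-n)_k (α+k+1)_{n-k} t^k / k!`. -/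
noncomputable def laguerre (n : ℕ) (α : ℝ) (t : ℝ) : ℝ :=
  (1 / (Nat.factorial n : ℝ)) * ∑ k ∈ Finset.range (n + 1),
    (ascPochhammer ℝ k).eval (-(n : ℝ)) * (ascPochhammer ℝ (n - k)).eval (α + k + 1)
      * t ^ k / (Nat.factorial k : ℝ)

/- Reversing the order of summation, the `k`-th Laguerre term matches the `(n - k)`-th Charlier
term: `(-n)_k = (-1)^k n!/(n-k)!`, and `(x - n + k + 1)_{n-k} = x(x-1)⋯(x-n+k+1)` is the falling
factorial in `x choose (n - k)`. -/

lemma genChoose_eq_descPochhammer_eval_div (x : ℝ) (k : ℕ) :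
    genChoose x k = (descPochhammer ℝ k).eval x / (k.factorial : ℝ) := by
  rw [genChoose, descPochhammer_eval_eq_prod_range]

lemma ascPochhammer_eval_neg_natCast {R : Type*} [Ring R] (n k : ℕ) :
    (ascPochhammer R k).eval (-(n : R)) = (-1) ^ k * (n.descFactorial k : R) := by
  rw [ascPochhammer_eval_neg_eq_descPochhammer, descPochhammer_eval_eq_descFactorial]

lemma laguerre_term_eq_charlier_term (a x : ℝ) {n k : ℕ} (hk : k ≤ n) :
    1 / (n.factorial : ℝ) * ((ascPochhammer ℝ k).eval (-(n : ℝ))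
        * (ascPochhammer ℝ (n - k)).eval (x - n + k + 1) * a ^ k / (k.factorial : ℝ))
      = genChoose x (n - k) * (-a) ^ k / (k.factorial : ℝ) := by
  have hshift : x - n + k + 1 = x - ((n - k : ℕ) : ℝ) + 1 := by
    rw [Nat.cast_sub hk]; ring
  have hfact : ((n - k).factorial : ℝ) * (n.descFactorial k : ℝ) = n.factorial := by
    exact_mod_cast Nat.factorial_mul_descFactorial hk
  rw [ascPochhammer_eval_neg_natCast, hshift, ← descPochhammer_eval_eq_ascPochhammer,
    genChoose_eq_descPochhammer_eval_div, neg_pow a, ← hfact]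
  have hdesc : (n.descFactorial k : ℝ) ≠ 0 := by
    exact_mod_cast (Nat.descFactorial_pos.mpr hk).ne'
  field_simp

/-- `C_n^{(a)}(x) = L_n^{(x-n)}(a)`. -/
theorem charlier_eq_laguerre (a x : ℝ) (n : ℕ) :
    charlier a n x = laguerre n (x - (n : ℝ)) a := by
  rw [charlier, laguerre, Finset.mul_sum, ← Finset.sum_range_reflect]
  refine Finset.sum_congr rfl fun k hk => ?_
  have hkn : k ≤ n := Nat.lt_succ_iff.mp (Finset.mem_range.mp hk)
  rw [Nat.add_sub_cancel, Nat.sub_sub_self hkn, laguerre_term_eq_charlier_term a x hkn]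
end

section
/- Let a > 0. For every integer i ≥ 2, the two numbers C_{i-1}^{(a)}(i−2) and C_i^{(a)}(i−1) are not both zero. Consequently, for infinitely many i the coefficient h_i = ((−1)^i / i!) C_{i-1}^{(a)}(i−2) is nonzero. -/
lemma genChoose_nat (n k : ℕ) : genChoose (n : ℝ) k = (n.choose k : ℝ) := by
  unfold genChoose
  by_cases h : k ≤ n
  · have hp : (∏ j ∈ Finset.range k, ((n : ℝ) - (j : ℝ))) = ((n.descFactorial k : ℕ) : ℝ) := by
      rw [Nat.descFactorial_eq_prod_range, Nat.cast_prod]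
      refine Finset.prod_congr rfl fun j hj => ?_
      have hj' : j ≤ n := le_trans (Nat.le_of_lt_succ (Nat.lt_succ_of_lt (Finset.mem_range.mp hj))) h
      rw [Nat.cast_sub hj']
    rw [hp, Nat.descFactorial_eq_factorial_mul_choose]
    push_cast
    rw [mul_comm, mul_div_assoc, div_self (by exact_mod_cast (Nat.factorial_ne_zero k)), mul_one]
  · push_neg at h
    rw [Nat.choose_eq_zero_of_lt h, Finset.prod_eq_zero (Finset.mem_range.mpr h) (by simp)]
    simp

noncomputable def cc (a : ℝ) (j : ℕ) : ℝ := (-a) ^ (j + 1) / ((j + 1).factorial : ℝ)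

noncomputable def Sa (a : ℝ) (n : ℕ) : ℝ :=
  ∑ j ∈ Finset.range n, ((n - 1).choose j : ℝ) * cc a j

lemma charlier_diag (a : ℝ) (n : ℕ) : charlier a (n + 1) ((n : ℝ)) = Sa a (n + 1) := by
  unfold charlier Sa cc
  simp only [Nat.add_sub_cancel]
  rw [Finset.sum_range_succ, genChoose_nat, Nat.choose_succ_self]
  simp only [Nat.cast_zero, zero_mul, zero_div, add_zero]
  rw [← Finset.sum_range_reflect (fun j => ((n.choose j : ℕ) : ℝ) * ((-a) ^ (j+1) / ((j+1).factorial : ℝ))) (n+1)]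
  refine Finset.sum_congr rfl fun k hk => ?_
  have hk' : k ≤ n := Nat.le_of_lt_succ (Finset.mem_range.mp hk)
  simp only [Nat.add_sub_cancel]
  rw [genChoose_nat, Nat.choose_symm hk']
  have h1 : n + 1 - k = (n - k) + 1 := by omega
  rw [h1, mul_div_assoc]

lemma hcc (a : ℝ) (j : ℕ) : a * cc a j = -(((j : ℝ) + 2) * cc a (j + 1)) := by
  unfold cc
  have h1 : ((j + 1).factorial : ℝ) ≠ 0 := by exact_mod_cast (j+1).factorial_ne_zero
  rw [Nat.factorial_succ (j + 1)]
  push_cast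
  field_simp
  ring

lemma keyR (m j : ℕ) :
    ((m : ℝ) + 3) * ((m + 2).choose (j + 1) : ℝ) + ((m : ℝ) + 1) * (m.choose (j + 1) : ℝ)
      = (2 * (m : ℝ) + 4) * ((m + 1).choose (j + 1) : ℝ) + ((j : ℝ) + 2) * ((m + 1).choose j : ℝ) := by
  have p1 : (m + 2).choose (j + 1) = (m + 1).choose j + (m + 1).choose (j + 1) :=
    Nat.choose_succ_succ _ _
  have p2 : (m + 1).choose (j + 1) = m.choose j + m.choose (j + 1) := Nat.choose_succ_succ _ _
  have h : (m.choose j : ℝ) * ((m : ℝ) + 1) = ((m + 1).choose j : ℝ) * (((m : ℝ) + 1) - (j : ℝ)) := by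
    by_cases hj : j ≤ m + 1
    · have := Nat.choose_mul_succ_eq m j
      have h2 : ((m.choose j * (m + 1) : ℕ) : ℝ) = (((m + 1).choose j * (m + 1 - j) : ℕ) : ℝ) := by
        exact_mod_cast congrArg (Nat.cast (R := ℝ)) this
      push_cast [Nat.cast_sub hj] at h2
      linarith [h2]
    · push_neg at hj
      rw [Nat.choose_eq_zero_of_lt (by omega), Nat.choose_eq_zero_of_lt (by omega)]
      simp
  rw [p1, p2]
  push_cast
  linear_combination -h

lemma Sa_rec (a : ℝ) (m : ℕ) :
    ((m : ℝ) + 3) * Sa a (m + 3)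
      = (2 * (m : ℝ) + 4 - a) * Sa a (m + 2) - ((m : ℝ) + 1) * Sa a (m + 1) := by
  have h31 : m + 3 - 1 = m + 2 := by omega
  have h21 : m + 2 - 1 = m + 1 := by omega
  have h11 : m + 1 - 1 = m := by omega
  have e1 : Sa a (m + 3)
      = (∑ j ∈ Finset.range (m + 2), ((m + 2).choose (j + 1) : ℝ) * cc a (j + 1)) + cc a 0 := by
    unfold Sa
    rw [h31, Finset.sum_range_succ']
    simp
  have r2 : Sa a (m + 2) = ∑ j ∈ Finset.range (m + 2), ((m + 1).choose j : ℝ) * cc a j := by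
    unfold Sa; rw [h21]
  have e2 : Sa a (m + 2)
      = (∑ j ∈ Finset.range (m + 2), ((m + 1).choose (j + 1) : ℝ) * cc a (j + 1)) + cc a 0 := by
    rw [r2, Finset.sum_range_succ']
    rw [Finset.sum_range_succ (fun j => ((m + 1).choose (j + 1) : ℝ) * cc a (j + 1)) (m + 1)]
    simp [Nat.choose_succ_self]
  have e3 : Sa a (m + 1)
      = (∑ j ∈ Finset.range (m + 2), (m.choose (j + 1) : ℝ) * cc a (j + 1)) + cc a 0 := by
    unfold Sa
    rw [h11, Finset.sum_range_succ']
    rw [Finset.sum_range_succ (fun j => (m.choose (j + 1) : ℝ) * cc a (j + 1)) (m + 1),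
      Finset.sum_range_succ (fun j => (m.choose (j + 1) : ℝ) * cc a (j + 1)) m]
    have z1 : m.choose (m + 1) = 0 := Nat.choose_succ_self m
    have z2 : m.choose (m + 2) = 0 := Nat.choose_eq_zero_of_lt (by omega)
    simp [z1, z2]
  have e4 : a * Sa a (m + 2)
      = -(∑ j ∈ Finset.range (m + 2), (((j : ℝ) + 2) * ((m + 1).choose j : ℝ)) * cc a (j + 1)) := by
    rw [r2, Finset.mul_sum, ← Finset.sum_neg_distrib]
    refine Finset.sum_congr rfl fun j hj => ?_
    linear_combination ((m + 1).choose j : ℝ) * hcc a j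
  have H : ((m : ℝ) + 3) * (∑ j ∈ Finset.range (m + 2), ((m + 2).choose (j + 1) : ℝ) * cc a (j + 1))
      = (2 * (m : ℝ) + 4) * (∑ j ∈ Finset.range (m + 2), ((m + 1).choose (j + 1) : ℝ) * cc a (j + 1))
        + (∑ j ∈ Finset.range (m + 2), (((j : ℝ) + 2) * ((m + 1).choose j : ℝ)) * cc a (j + 1))
        - ((m : ℝ) + 1) * (∑ j ∈ Finset.range (m + 2), (m.choose (j + 1) : ℝ) * cc a (j + 1)) := by
    rw [Finset.mul_sum, Finset.mul_sum, Finset.mul_sum, ← Finset.sum_add_distrib,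
      ← Finset.sum_sub_distrib]
    refine Finset.sum_congr rfl fun j hj => ?_
    linear_combination (cc a (j + 1)) * keyR m j
  linear_combination ((m : ℝ) + 3) * e1 - (2 * (m : ℝ) + 4) * e2 + e4 + ((m : ℝ) + 1) * e3 + H

lemma Sa_one (a : ℝ) : Sa a 1 = -a := by
  simp [Sa, cc, Nat.factorial]

lemma Sa_notboth (a : ℝ) (ha : 0 < a) :
    ∀ n : ℕ, ¬ (Sa a (n + 1) = 0 ∧ Sa a (n + 2) = 0) := by
  intro n
  induction n with
  | zero =>
    rintro ⟨h1, -⟩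
    rw [Sa_one] at h1
    linarith
  | succ k ih =>
    rintro ⟨h1, h2⟩
    apply ih
    refine ⟨?_, h1⟩
    have hr := Sa_rec a k
    have hk3 : k + 2 + 1 = k + 3 := rfl
    rw [hk3] at h2
    rw [h1, h2] at hr
    have hk1 : ((k : ℝ) + 1) ≠ 0 := by positivity
    have : ((k : ℝ) + 1) * Sa a (k + 1) = 0 := by linarith
    exact (mul_eq_zero.mp this).resolve_left hk1

/-- For `a > 0` and `i ≥ 2`, the numbers `C_{i-1}^{(a)}(i-2)` and
`C_i^{(a)}(i-1)` are not both zero; consequently `h_i = ((-1)^i / i!) C_{i-1}^{(a)}(i-2)`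
is nonzero for infinitely many `i`. -/
theorem charlier_leading_coefficients_infinitely_often_nonzero (a : ℝ) (ha : 0 < a) :
    (∀ i : ℕ, 2 ≤ i →
      charlier a (i - 1) ((i : ℝ) - 2) ≠ 0 ∨ charlier a i ((i : ℝ) - 1) ≠ 0) ∧
    {i : ℕ | (-1 : ℝ) ^ i / (Nat.factorial i : ℝ) * charlier a (i - 1) ((i : ℝ) - 2) ≠ 0}.Infinite := by
  have hdiag1 : ∀ m : ℕ, charlier a (m + 2 - 1) (((m + 2 : ℕ) : ℝ) - 2) = Sa a (m + 1) := by
    intro m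
    have hx : ((m + 2 : ℕ) : ℝ) - 2 = (m : ℝ) := by push_cast; ring
    have hi : m + 2 - 1 = m + 1 := by omega
    rw [hi, hx, charlier_diag]
  have hdiag2 : ∀ m : ℕ, charlier a (m + 2) (((m + 2 : ℕ) : ℝ) - 1) = Sa a (m + 2) := by
    intro m
    have hx : ((m + 2 : ℕ) : ℝ) - 1 = (((m + 1 : ℕ)) : ℝ) := by push_cast; ring
    rw [hx]
    exact charlier_diag a (m + 1)
  have hfac : ∀ i : ℕ, ((-1 : ℝ) ^ i / (Nat.factorial i : ℝ)) ≠ 0 := fun i =>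
    div_ne_zero (pow_ne_zero _ (by norm_num)) (Nat.cast_ne_zero.mpr (Nat.factorial_ne_zero i))
  constructor
  · intro i hi
    obtain ⟨m, rfl⟩ : ∃ m, i = m + 2 := ⟨i - 2, by omega⟩
    by_contra h
    push_neg at h
    obtain ⟨h1, h2⟩ := h
    rw [hdiag1 m] at h1
    rw [hdiag2 m] at h2
    exact Sa_notboth a ha m ⟨h1, h2⟩
  · apply Set.infinite_of_forall_exists_gt
    intro N
    by_cases h : Sa a (N + 1) = 0
    · have h2 : Sa a (N + 2) ≠ 0 := fun h2 => Sa_notboth a ha N ⟨h, h2⟩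
      refine ⟨N + 3, ?_, by omega⟩
      simp only [Set.mem_setOf_eq]
      have : charlier a (N + 3 - 1) (((N + 3 : ℕ) : ℝ) - 2) = Sa a (N + 2) := hdiag1 (N + 1)
      rw [this]
      exact mul_ne_zero (hfac _) h2
    · refine ⟨N + 2, ?_, by omega⟩
      simp only [Set.mem_setOf_eq]
      have : charlier a (N + 2 - 1) (((N + 2 : ℕ) : ℝ) - 2) = Sa a (N + 1) := hdiag1 N
      rw [this]
      exact mul_ne_zero (hfac _) h
end
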